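/- arXiv:2310.05655 — 4 statements merged into one kernel-verified Lean document; each statement's English description precedes it below -/
import Mathlib

section
/- Let S be a finite set, λ : S × S → ℝ≥0 a rate function (λ(a,a) = 0 for all a), with total rate Λ(a) = ∑_{b∈S} λ(a,b), and let π be a probability distribution on S. Suppose there is a bijection s : S → S that is π-isometric (π(s(a)) = π(a) for all a ∈ S), satisfies skew detailed balance (π(a)·λ(a,b) = π(s(b))·λ(s(b), s(a)) for all a, b ∈ S), and satisfies the semi-local condition (Λ(a) = Λ(s(a)) for all a ∈ S). Then for every function f : S → ℝ, ∑_{a∈S} ∑_{b∈S} λ(a,b)·(f(b) − f(a))·π(a) = 0. -/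
/-!
Reindexing the inflow `∑ a, π a λ(a, b)` by `s` and applying skew detailed balance, the
isometry and the semi-local condition turns it into `π b Λ(b)`: the chain satisfies global
balance. Global balance says that the flux `π a λ(a, b)` has equal row and column sums, which
is exactly the stationarity equation after exchanging the order of summation.
-/

open scoped NNReal

section FluxBalance

variable {S R : Type*} [Fintype S]

theorem sum_sum_mul_sub_eq_zero_of_balance [CommRing R] (q : S → S → R)
    (hq : ∀ b, ∑ a, q a b = ∑ c, q b c) (f : S → R) :
    ∑ a, ∑ b, q a b * (f b - f a) = 0 := by
  simp only [mul_sub, Finset.sum_sub_distrib]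
  rw [Finset.sum_comm, sub_eq_zero]
  refine Finset.sum_congr rfl fun b _ => ?_
  rw [← Finset.sum_mul, ← Finset.sum_mul, hq]

theorem sum_mul_eq_mul_sum_of_skew_balance [CommSemiring R] (lam : S → S → R) (pi : S → R)
    (s : S ≃ S) (hiso : ∀ a, pi (s a) = pi a)
    (hskew : ∀ a b, pi a * lam a b = pi (s b) * lam (s b) (s a))
    (hsemi : ∀ a, ∑ b, lam a b = ∑ b, lam (s a) b) (b : S) :
    ∑ a, pi a * lam a b = pi b * ∑ c, lam b c :=
  calc ∑ a, pi a * lam a b = ∑ a, pi (s b) * lam (s b) (s a) :=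
        Finset.sum_congr rfl fun a _ => hskew a b
    _ = pi (s b) * ∑ c, lam (s b) c := by rw [← Finset.mul_sum, Equiv.sum_comp s (lam (s b))]
    _ = pi b * ∑ c, lam b c := by rw [hiso, ← hsemi]

end FluxBalance

theorem skew_balance_implies_generator_stationarity_general
    {S : Type*} [Fintype S]
    (lam : S → S → ℝ≥0)
    (pi : S → ℝ≥0)
    (s : S ≃ S)
    (hiso : ∀ a, pi (s a) = pi a)
    (hskew : ∀ a b, pi a * lam a b = pi (s b) * lam (s b) (s a))
    (hsemi : ∀ a, ∑ b, lam a b = ∑ b, lam (s a) b)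
    (f : S → ℝ) :
    ∑ a, ∑ b, (lam a b : ℝ) * (f b - f a) * (pi a : ℝ) = 0 := by
  have hbalance : ∀ b, ∑ a, (pi a * lam a b : ℝ) = ∑ c, (pi b * lam b c : ℝ) := by
    intro b
    rw [← Finset.mul_sum]
    exact_mod_cast sum_mul_eq_mul_sum_of_skew_balance lam pi s hiso hskew hsemi b
  calc ∑ a, ∑ b, (lam a b : ℝ) * (f b - f a) * (pi a : ℝ)
      = ∑ a, ∑ b, (pi a * lam a b : ℝ) * (f b - f a) :=
        Finset.sum_congr rfl fun a _ => Finset.sum_congr rfl fun b _ => by ring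
    _ = 0 := sum_sum_mul_sub_eq_zero_of_balance _ hbalance f

/-- Skew-balance stationarity criterion: a π-isometric bijection `s` satisfying skew
detailed balance and the semi-local condition implies the generator stationarity equation. -/
theorem skew_balance_implies_generator_stationarity
    {S : Type*} [Fintype S]
    (lam : S → S → ℝ≥0) (hlam : ∀ a, lam a a = 0)
    (pi : S → ℝ≥0) (hpi : ∑ a, pi a = 1)
    (s : S ≃ S)
    (hiso : ∀ a, pi (s a) = pi a)
    (hskew : ∀ a b, pi a * lam a b = pi (s b) * lam (s b) (s a))
    (hsemi : ∀ a, ∑ b, lam a b = ∑ b, lam (s a) b)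
    (f : S → ℝ) :
    ∑ a, ∑ b, (lam a b : ℝ) * (f b - f a) * (pi a : ℝ) = 0 :=
  skew_balance_implies_generator_stationarity_general lam pi s hiso hskew hsemi f
end

section
/- Let X be a finite set, I ⊆ X × X an irreflexive relation ('insert moves'), π : X → (0,∞) a strictly positive probability distribution on X, and g : ℝ≥0 → ℝ≥0 a balancing function, i.e. g(t) = t·g(1/t) for all t > 0. On the lifted state space S = X × {−1,+1}, writing γ^d = (γ,d), define rates: λ(γ^{+1} → η^{+1}) = g(π(η)/π(γ)) if (γ,η) ∈ I and 0 otherwise; λ(η^{−1} → γ^{−1}) = g(π(γ)/π(η)) if (γ,η) ∈ I and 0 otherwise; λ(γ^{d} → γ^{−d}) = max(0, ∑_{η∈X} λ(γ^{−d} → η^{−d}) − ∑_{η∈X} λ(γ^{d} → η^{d})); and all remaining rates 0. Define π̃(γ^d) = π(γ)/2 and the flip map s(γ^d) = γ^{−d}. Then skew detailed balance holds: π̃(a)·λ(a → b) = π̃(s(b))·λ(s(b) → s(a)) for all a, b ∈ S. -/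
open scoped NNReal

/-!
Moves inside a direction are balanced by the balancing-function identity
`a * g (b / a) = b * g (a / b)`, which pairs the insert rate `γ⁺ → η⁺` with the delete rate
`η⁻ → γ⁻`. A flip `γ^d → γ^{-d}` is its own skew reversal, so its rate needs no constraint,
and all other direction-changing rates vanish.
-/

lemma mul_apply_div_comm_of_balancing {g : ℝ≥0 → ℝ≥0}
    (hg : ∀ t : ℝ≥0, 0 < t → g t = t * g t⁻¹) {a b : ℝ≥0} (ha : 0 < a) (hb : 0 < b) :
    a * g (b / a) = b * g (a / b) := by
  rw [hg (b / a) (div_pos hb ha), inv_div, ← mul_assoc, mul_div_cancel₀ _ ha.ne']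

lemma half_mul_ite_apply_div_comm_of_balancing {g : ℝ≥0 → ℝ≥0}
    (hg : ∀ t : ℝ≥0, 0 < t → g t = t * g t⁻¹) {a b : ℝ≥0} (ha : 0 < a) (hb : 0 < b)
    (p : Prop) [Decidable p] :
    a / 2 * (if p then g (b / a) else 0) = b / 2 * (if p then g (a / b) else 0) := by
  split_ifs
  · rw [div_mul_eq_mul_div, div_mul_eq_mul_div, mul_apply_div_comm_of_balancing hg ha hb]
  · simp

lemma half_mul_direction_change_rate_comm {X : Type*} (w : X → ℝ≥0) (lam : X × Bool → X × Bool → ℝ≥0)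
    (hzero : ∀ (γ η : X) (d : Bool), γ ≠ η → lam (γ, d) (η, !d) = 0) (γ η : X) (d : Bool) :
    w γ / 2 * lam (γ, d) (η, !d) = w η / 2 * lam (η, d) (γ, !d) := by
  rcases eq_or_ne γ η with rfl | hne
  · rfl
  · rw [hzero γ η d hne, hzero η γ d hne.symm, mul_zero, mul_zero]

/-- Directions are encoded as `Bool`, with `true = +1` and `false = -1`. -/
theorem causal_zigzag_skew_detailed_balance_general
    {X : Type*}
    (I : X → X → Prop) [DecidableRel I]
    (pi : X → ℝ≥0) (hpos : ∀ γ, 0 < pi γ)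
    (g : ℝ≥0 → ℝ≥0) (hg : ∀ t : ℝ≥0, 0 < t → g t = t * g t⁻¹)
    (lam : X × Bool → X × Bool → ℝ≥0)
    (hup : ∀ γ η : X, lam (γ, true) (η, true) = if I γ η then g (pi η / pi γ) else 0)
    (hdown : ∀ γ η : X, lam (η, false) (γ, false) = if I γ η then g (pi γ / pi η) else 0)
    (hzero : ∀ (γ η : X) (d : Bool), γ ≠ η → lam (γ, d) (η, !d) = 0) :
    ∀ a b : X × Bool,
      (pi a.1 / 2) * lam a b = (pi b.1 / 2) * lam (b.1, !b.2) (a.1, !a.2) := by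
  rintro ⟨γ, d⟩ ⟨η, e⟩
  cases d <;> cases e
  · change pi γ / 2 * lam (γ, false) (η, false) = pi η / 2 * lam (η, true) (γ, true)
    rw [hdown η γ, hup η γ]
    exact half_mul_ite_apply_div_comm_of_balancing hg (hpos γ) (hpos η) _
  · exact half_mul_direction_change_rate_comm pi lam hzero γ η false
  · exact half_mul_direction_change_rate_comm pi lam hzero γ η true
  · change pi γ / 2 * lam (γ, true) (η, true) = pi η / 2 * lam (η, false) (γ, false)
    rw [hup γ η, hdown γ η]
    exact half_mul_ite_apply_div_comm_of_balancing hg (hpos γ) (hpos η) _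

/-- The Causal Zig-Zag rates on the lifted state space `X × Bool` (with `true = +1`,
`false = -1`) satisfy skew detailed balance with respect to the lifted target
`π̃(γ^d) = π(γ)/2` and the direction-flip map `s(γ^d) = γ^{-d}`. -/
theorem causal_zigzag_skew_detailed_balance
    {X : Type*} [Fintype X]
    (I : X → X → Prop) [DecidableRel I] (hirrefl : ∀ γ, ¬ I γ γ)
    (pi : X → ℝ≥0) (hpos : ∀ γ, 0 < pi γ) (hsum : ∑ γ, pi γ = 1)
    (g : ℝ≥0 → ℝ≥0) (hg : ∀ t : ℝ≥0, 0 < t → g t = t * g t⁻¹)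
    (lam : X × Bool → X × Bool → ℝ≥0)
    (hup : ∀ γ η : X, lam (γ, true) (η, true) = if I γ η then g (pi η / pi γ) else 0)
    (hdown : ∀ γ η : X, lam (η, false) (γ, false) = if I γ η then g (pi γ / pi η) else 0)
    (hflip : ∀ (γ : X) (d : Bool),
      (lam (γ, d) (γ, !d) : ℝ) =
        max 0 ((∑ η : X, (lam (γ, !d) (η, !d) : ℝ)) - ∑ η : X, (lam (γ, d) (η, d) : ℝ)))
    (hzero : ∀ (γ η : X) (d : Bool), γ ≠ η → lam (γ, d) (η, !d) = 0) :
    ∀ a b : X × Bool,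
      (pi a.1 / 2) * lam a b = (pi b.1 / 2) * lam (b.1, !b.2) (a.1, !a.2) :=
  causal_zigzag_skew_detailed_balance_general I pi hpos g hg lam hup hdown hzero
end

section
/- Let X be a finite set, I ⊆ X × X an irreflexive relation, π : X → (0,∞) a strictly positive probability distribution, and g : ℝ≥0 → ℝ≥0 a balancing function, i.e. g(t) = t·g(1/t) for all t > 0. On the lifted state space S = X × {−1,+1}, define the Causal Zig-Zag rates: λ(γ^{+1} → η^{+1}) = g(π(η)/π(γ)) if (γ,η) ∈ I and 0 otherwise; λ(η^{−1} → γ^{−1}) = g(π(γ)/π(η)) if (γ,η) ∈ I and 0 otherwise; λ(γ^{d} → γ^{−d}) = max(0, ∑_{η∈X} λ(γ^{−d} → η^{−d}) − ∑_{η∈X} λ(γ^{d} → η^{d})); all remaining rates 0. Then the distribution π̃ on S given by π̃(γ^d) = π(γ)/2 satisfies the generator stationarity equation: for every f : S → ℝ, ∑_{a∈S} ∑_{b∈S} λ(a → b)·(f(b) − f(a))·π̃(a) = 0. -/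
open scoped NNReal

/-!
On each layer `X × {d}` the Zig-Zag moves are, weighted by `π`, the time reversal of the moves
on the opposite layer: `π(γ) λ(γ^+ → η^+) = π(η) λ(η^- → γ^-)`, because `g` is a balancing
function. So the `π`-weighted flow into `γ^d` along its own layer equals `π(γ)` times the total
rate out of `γ^{-d}` along the opposite layer. The flip rates `max 0 (·)` make up exactly the
difference between the two layer rates at `γ`: both the inflow and the outflow of `γ^d` equal
`π(γ) · max (λ_d(γ), λ_{-d}(γ))`. This global balance is the stationarity of `π̃`.
-/

theorem add_max_zero_sub {α : Type*} [AddCommGroup α] [LinearOrder α] [IsOrderedAddMonoid α]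
    (a b : α) : a + max 0 (b - a) = max a b := by
  rw [← max_add_add_left, add_zero, add_sub_cancel]

theorem Fintype.sum_bool_eq_add_not {M : Type*} [AddCommMonoid M] (F : Bool → M) (d : Bool) :
    ∑ e, F e = F d + F !d := by
  cases d <;> simp [add_comm]

section GlobalBalance

variable {S : Type*} [Fintype S]

def GlobalBalance (lam : S → S → ℝ) (w : S → ℝ) : Prop :=
  ∀ b, ∑ a, lam a b * w a = (∑ c, lam b c) * w b

theorem GlobalBalance.div_const {lam : S → S → ℝ} {w : S → ℝ} (h : GlobalBalance lam w)
    (r : ℝ) : GlobalBalance lam (fun a => w a / r) := by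
  intro b
  simp only [mul_div_assoc', ← Finset.sum_div, h b]

theorem GlobalBalance.sum_generator_eq_zero {lam : S → S → ℝ} {w : S → ℝ}
    (h : GlobalBalance lam w) (f : S → ℝ) :
    ∑ a, ∑ b, lam a b * (f b - f a) * w a = 0 := by
  have inflow : ∑ a, ∑ b, lam a b * f b * w a = ∑ b, (∑ a, lam a b * w a) * f b := by
    rw [Finset.sum_comm]
    simp only [Finset.sum_mul]
    exact Fintype.sum_congr _ _ fun b => Fintype.sum_congr _ _ fun a => by ring
  have outflow : ∑ a, ∑ b, lam a b * f a * w a = ∑ a, (∑ b, lam a b) * w a * f a := by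
    simp only [Finset.sum_mul]
    exact Fintype.sum_congr _ _ fun a => Fintype.sum_congr _ _ fun b => by ring
  simp only [mul_sub, sub_mul, Finset.sum_sub_distrib, inflow, outflow, sub_eq_zero]
  exact Fintype.sum_congr _ _ fun b => by rw [h b]

end GlobalBalance

theorem NNReal.balancing_mul_eq {g : ℝ≥0 → ℝ≥0} (hg : ∀ t : ℝ≥0, 0 < t → g t = t * g t⁻¹)
    {p q : ℝ≥0} (hp : 0 < p) (hq : 0 < q) : g (p / q) * q = p * g (q / p) := by
  rw [hg (p / q) (div_pos hp hq), inv_div, mul_comm (p / q), mul_assoc, div_mul_cancel₀ _ hq.ne',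
    mul_comm]

theorem zigzag_skew_balance {X : Type*} {I : X → X → Prop} [DecidableRel I] {pi : X → ℝ≥0}
    (hpos : ∀ γ, 0 < pi γ) {g : ℝ≥0 → ℝ≥0} (hg : ∀ t : ℝ≥0, 0 < t → g t = t * g t⁻¹)
    {lam : X × Bool → X × Bool → ℝ≥0}
    (hup : ∀ γ η : X, lam (γ, true) (η, true) = if I γ η then g (pi η / pi γ) else 0)
    (hdown : ∀ γ η : X, lam (η, false) (γ, false) = if I γ η then g (pi γ / pi η) else 0)
    (x γ : X) (d : Bool) : lam (x, d) (γ, d) * pi x = pi γ * lam (γ, !d) (x, !d) := by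
  cases d <;> simp only [Bool.not_false, Bool.not_true, hdown, hup] <;> split_ifs <;>
    simp only [NNReal.balancing_mul_eq hg (hpos γ) (hpos x), zero_mul, mul_zero]

section LiftedChain

variable {X : Type*} [Fintype X]

theorem globalBalance_of_skew_balance (lam : X × Bool → X × Bool → ℝ) (pi : X → ℝ)
    (hskew : ∀ (x γ : X) (d : Bool), lam (x, d) (γ, d) * pi x = pi γ * lam (γ, !d) (x, !d))
    (hflip : ∀ (γ : X) (d : Bool),
      lam (γ, d) (γ, !d) = max 0 ((∑ η, lam (γ, !d) (η, !d)) - ∑ η, lam (γ, d) (η, d)))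
    (hzero : ∀ (γ η : X) (d : Bool), γ ≠ η → lam (γ, d) (η, !d) = 0) :
    GlobalBalance lam (fun a => pi a.1) := by
  rintro ⟨γ, d⟩
  set layerRate : Bool → ℝ := fun e => ∑ η, lam (γ, e) (η, e)
  have flip_in : ∑ x, lam (x, !d) (γ, d) * pi x = lam (γ, !d) (γ, d) * pi γ :=
    Fintype.sum_eq_single γ fun x hx => by
      simpa using congrArg (· * pi x) (hzero x γ (!d) hx)
  have flip_out : ∑ x, lam (γ, d) (x, !d) = lam (γ, d) (γ, !d) :=
    Fintype.sum_eq_single γ fun x hx => hzero γ x d (Ne.symm hx)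
  have flip_rate : lam (γ, !d) (γ, d) = max 0 (layerRate d - layerRate (!d)) := by
    simpa using hflip γ (!d)
  have inflow : ∑ a, lam a (γ, d) * pi a.1 =
      pi γ * (layerRate (!d) + max 0 (layerRate d - layerRate (!d))) := by
    rw [Fintype.sum_prod_type]
    simp only [Fintype.sum_bool_eq_add_not _ d, Finset.sum_add_distrib, hskew, ← Finset.mul_sum,
      flip_in, flip_rate]
    ring
  have outflow : ∑ c, lam (γ, d) c = layerRate d + max 0 (layerRate (!d) - layerRate d) := by
    rw [Fintype.sum_prod_type, Finset.sum_comm]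
    simp only [Fintype.sum_bool_eq_add_not _ d, flip_out, hflip, layerRate]
  rw [inflow, outflow, add_max_zero_sub, add_max_zero_sub, max_comm, mul_comm]

end LiftedChain

theorem causal_zigzag_stationarity_general
    {X : Type*} [Fintype X]
    (I : X → X → Prop) [DecidableRel I]
    (pi : X → ℝ≥0) (hpos : ∀ γ, 0 < pi γ)
    (g : ℝ≥0 → ℝ≥0) (hg : ∀ t : ℝ≥0, 0 < t → g t = t * g t⁻¹)
    (lam : X × Bool → X × Bool → ℝ≥0)
    (hup : ∀ γ η : X, lam (γ, true) (η, true) = if I γ η then g (pi η / pi γ) else 0)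
    (hdown : ∀ γ η : X, lam (η, false) (γ, false) = if I γ η then g (pi γ / pi η) else 0)
    (hflip : ∀ (γ : X) (d : Bool),
      (lam (γ, d) (γ, !d) : ℝ) =
        max 0 ((∑ η : X, (lam (γ, !d) (η, !d) : ℝ)) - ∑ η : X, (lam (γ, d) (η, d) : ℝ)))
    (hzero : ∀ (γ η : X) (d : Bool), γ ≠ η → lam (γ, d) (η, !d) = 0) :
    ∀ f : X × Bool → ℝ,
      ∑ a : X × Bool, ∑ b : X × Bool,
        (lam a b : ℝ) * (f b - f a) * ((pi a.1 : ℝ) / 2) = 0 := by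
  have balance : GlobalBalance (fun a b => (lam a b : ℝ)) (fun a => (pi a.1 : ℝ)) :=
    globalBalance_of_skew_balance (fun a b => (lam a b : ℝ)) (fun x => (pi x : ℝ))
      (fun x γ d => by exact_mod_cast zigzag_skew_balance hpos hg hup hdown x γ d) hflip
      (fun γ η d h => by simp [hzero γ η d h])
  exact (balance.div_const 2).sum_generator_eq_zero

/-- The lifted target `π̃(γ^d) = π(γ)/2` satisfies the generator stationarity equation
for the Causal Zig-Zag rates on `X × Bool` (with `true = +1`, `false = -1`). -/
theorem causal_zigzag_stationarity
    {X : Type*} [Fintype X]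
    (I : X → X → Prop) [DecidableRel I] (hirrefl : ∀ γ, ¬ I γ γ)
    (pi : X → ℝ≥0) (hpos : ∀ γ, 0 < pi γ) (hsum : ∑ γ, pi γ = 1)
    (g : ℝ≥0 → ℝ≥0) (hg : ∀ t : ℝ≥0, 0 < t → g t = t * g t⁻¹)
    (lam : X × Bool → X × Bool → ℝ≥0)
    (hup : ∀ γ η : X, lam (γ, true) (η, true) = if I γ η then g (pi η / pi γ) else 0)
    (hdown : ∀ γ η : X, lam (η, false) (γ, false) = if I γ η then g (pi γ / pi η) else 0)
    (hflip : ∀ (γ : X) (d : Bool),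
      (lam (γ, d) (γ, !d) : ℝ) =
        max 0 ((∑ η : X, (lam (γ, !d) (η, !d) : ℝ)) - ∑ η : X, (lam (γ, d) (η, d) : ℝ)))
    (hzero : ∀ (γ η : X) (d : Bool), γ ≠ η → lam (γ, d) (η, !d) = 0) :
    ∀ f : X × Bool → ℝ,
      ∑ a : X × Bool, ∑ b : X × Bool,
        (lam a b : ℝ) * (f b - f a) * ((pi a.1 : ℝ) / 2) = 0 :=
  causal_zigzag_stationarity_general I pi hpos g hg lam hup hdown hflip hzero
end

section
/- Let G be a finite simple graph with vertex set V endowed with a linear order such that for every vertex v, the set P(v) = {u ∈ V : u < v and u is adjacent to v} of earlier neighbours of v is a clique of G. Then the number of cliques of G (vertex subsets that are pairwise adjacent, including the empty set) equals 1 + ∑_{v∈V} 2^{|P(v)|}. -/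
/-!
A nonempty clique `s` is determined by its largest vertex `v` together with `s \ {v}`, and
`s \ {v}` can be any subset of `P(v)`: it lies in `P(v)` because `s` is a clique, and conversely
adding `v` to a subset of the clique `P(v)` gives a clique. Hence the nonempty cliques with
largest vertex `v` number `2^{|P(v)|}`, and the empty clique contributes the `1`.
-/

open Finset

namespace SimpleGraph

variable {V : Type*} [Fintype V] [LinearOrder V] (G : SimpleGraph V) [DecidableRel G.Adj]

def earlierNeighborFinset (v : V) : Finset V := {u | u < v ∧ G.Adj u v}

variable {G}

@[simp]
lemma mem_earlierNeighborFinset {u v : V} :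
    u ∈ G.earlierNeighborFinset v ↔ u < v ∧ G.Adj u v := by
  simp [earlierNeighborFinset]

lemma self_notMem_earlierNeighborFinset (v : V) : v ∉ G.earlierNeighborFinset v := by
  simp

lemma isClique_and_max_eq_iff {v : V} (hv : G.IsClique {u | u < v ∧ G.Adj u v})
    {s : Finset V} :
    G.IsClique (s : Set V) ∧ s.max = v ↔ ∃ t ⊆ G.earlierNeighborFinset v, insert v t = s := by
  constructor
  · rintro ⟨hs, hmax⟩
    have hvs : v ∈ s := mem_of_max hmax
    refine ⟨s.erase v, fun u hu => ?_, insert_erase hvs⟩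
    obtain ⟨huv, hus⟩ := mem_erase.1 hu
    exact mem_earlierNeighborFinset.2
      ⟨(le_max_of_eq hus hmax).lt_of_ne huv, hs hus hvs huv⟩
  · rintro ⟨t, ht, rfl⟩
    have htP : ∀ u ∈ t, u < v ∧ G.Adj u v := fun u hu => mem_earlierNeighborFinset.1 (ht hu)
    refine ⟨?_, ?_⟩
    · rw [coe_insert]
      exact (hv.subset fun u hu => htP u hu).insert fun u hu _ => (htP u hu).2.symm
    · rw [max_insert, max_eq_left]
      exact Finset.max_le fun u hu => WithBot.coe_le_coe.2 (htP u hu).1.le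

lemma card_filter_isClique_max_eq {v : V} (hv : G.IsClique {u | u < v ∧ G.Adj u v}) :
    #{s : Finset V | G.IsClique (s : Set V) ∧ s.max = v} = 2 ^ #(G.earlierNeighborFinset v) := by
  have hfiber : ({s : Finset V | G.IsClique (s : Set V) ∧ s.max = v} : Finset (Finset V)) =
      (G.earlierNeighborFinset v).powerset.image (insert v) := by
    ext s
    simp [isClique_and_max_eq_iff hv]
  rw [hfiber, card_image_of_injOn, card_powerset]
  intro t ht t' ht' h
  have hv : ∀ t ∈ (G.earlierNeighborFinset v).powerset, v ∉ t :=
    fun t ht hvt => self_notMem_earlierNeighborFinset v (mem_powerset.1 ht hvt)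
  rw [← erase_insert (hv t ht), ← erase_insert (hv t' ht'), h]

lemma card_filter_isClique_max_eq_bot :
    #{s : Finset V | G.IsClique (s : Set V) ∧ s.max = ⊥} = 1 := by
  rw [card_eq_one]
  exact ⟨∅, ext fun s => by simp +contextual [Finset.max_eq_bot]⟩

end SimpleGraph

/-- If the vertices of a finite simple graph are linearly ordered so that the earlier
neighbours `P(v)` of every vertex `v` form a clique, then the number of cliques
(including the empty set) equals `1 + ∑_v 2^{|P(v)|}`. -/
theorem clique_count_chordal
    {V : Type*} [Fintype V] [LinearOrder V]
    (G : SimpleGraph V) [DecidableRel G.Adj]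
    (hP : ∀ v : V, G.IsClique {u : V | u < v ∧ G.Adj u v}) :
    Nat.card {s : Finset V // G.IsClique (s : Set V)} =
      1 + ∑ v : V, 2 ^ (Finset.univ.filter (fun u : V => u < v ∧ G.Adj u v)).card := by
  rw [Nat.card_eq_fintype_card, Fintype.card_subtype,
    card_eq_sum_card_fiberwise (f := Finset.max) (t := univ) fun _ _ => mem_univ _]
  simp only [filter_filter]
  -- `WithBot V` unfolds to `Option V`, with `⊥ = none`
  refine (Fintype.sum_option _).trans ?_
  exact congrArg₂ (· + ·) SimpleGraph.card_filter_isClique_max_eq_bot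
    (sum_congr rfl fun v _ => SimpleGraph.card_filter_isClique_max_eq (hP v))
end
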